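/- arXiv:1603.08827 — 3 statements merged into one kernel-verified Lean document; each statement's English description precedes it below -/
import Mathlib

section
/- For every n > 2 there exist n pairwise disjoint pairs {α_1,β_1},...,{α_n,β_n} of vertices of the hypercube Q_n with d(α_i,β_i) odd for every i, such that there do NOT exist n pairwise vertex-disjoint paths in Q_n, the i-th path having endpoints α_i and β_i, covering every vertex of Q_n exactly once. -/
/-!
Take `αᵢ = eᵢ` and `βᵢ = eᵢ + eᵢ₊₁`, indices mod `n` (for `n > 2` these pairs are disjoint),
all at distance `1`. The zero vector is no endpoint, so it is an inner vertex of some path `Pⱼ`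
and has two distinct neighbours on `Pⱼ`. But every neighbour of `0` is some `eₖ`, the first
vertex of `Pₖ`, and as the paths are disjoint it lies on `Pⱼ` only if `k = j`: both neighbours
would be `eⱼ`.
-/

open SimpleGraph Finset

attribute [local instance 10] Classical.propDecidable

/-- Vertices of the `n`-dimensional hypercube: 0-1 vectors of length `n`. -/
abbrev Vtx (n : ℕ) : Type := Fin n → Bool

/-- The hypercube graph `Q_n`: two vectors are adjacent iff they differ in
exactly one coordinate, i.e. their Hamming distance is `1`. -/
def cube (n : ℕ) : SimpleGraph (Vtx n) where
  Adj α β := hammingDist α β = 1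
  symm := by
    constructor
    intro α β h
    rwa [hammingDist_comm]
  loopless := by
    constructor
    intro α h
    simp [hammingDist_self] at h

/-- The parity `χ(α) = (-1)^(sum of coordinates of α)`. -/
def chi {n : ℕ} (α : Vtx n) : ℤ := ∏ i, if α i then (-1 : ℤ) else 1

/-- `χ(α) + χ(β)` for an unordered pair `{α, β}`. -/
def pairChi {n : ℕ} : Sym2 (Vtx n) → ℤ :=
  Sym2.lift ⟨fun α β => chi α + chi β, fun _ _ => add_comm _ _⟩

/-- `∪A` : the set of all vertices occurring in pairs of `A`. -/
def suppA {n : ℕ} (A : Finset (Sym2 (Vtx n))) : Set (Vtx n) :=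
  {v | ∃ p ∈ A, v ∈ p}

/-- A pair-set: distinct pairs are disjoint (as vertex sets), and a nonempty
pair-set contains a non-degenerated pair. -/
def IsPairSet {n : ℕ} (A : Finset (Sym2 (Vtx n))) : Prop :=
  (∀ p ∈ A, ∀ q ∈ A, p ≠ q → ∀ v : Vtx n, v ∈ p → v ∉ q) ∧
  (A.Nonempty → ∃ p ∈ A, ¬ p.IsDiag)

/-- An odd pair: its two vertices have different parities. -/
def OddPair {n : ℕ} (p : Sym2 (Vtx n)) : Prop :=
  ∃ α β : Vtx n, p = s(α, β) ∧ chi α ≠ chi β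

/-- An odd pair-set: every pair is odd. -/
def OddPairSet {n : ℕ} (A : Finset (Sym2 (Vtx n))) : Prop :=
  ∀ p ∈ A, OddPair p

/-- A balanced pair-set: the parities sum up to `0`. -/
def BalancedPS {n : ℕ} (A : Finset (Sym2 (Vtx n))) : Prop :=
  ∑ p ∈ A, pairChi p = 0

/-- An edge-pair: its two vertices differ in exactly one coordinate. -/
def IsEdgePair {n : ℕ} (p : Sym2 (Vtx n)) : Prop :=
  ∃ α β : Vtx n, p = s(α, β) ∧ hammingDist α β = 1

/-- `enco X` : vertices all of whose neighbours lie in `X`. -/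
def enco {n : ℕ} (X : Set (Vtx n)) : Set (Vtx n) :=
  {γ | ∀ δ : Vtx n, (cube n).Adj γ δ → δ ∈ X}

/-- `enc X = enco X \ X` for a vertex set `X`. -/
def encSet {n : ℕ} (X : Set (Vtx n)) : Set (Vtx n) := enco X \ X

/-- `enc A = enco (∪A) \ ∪A` for a pair-set `A`. -/
def encA {n : ℕ} (A : Finset (Sym2 (Vtx n))) : Set (Vtx n) :=
  enco (suppA A) \ suppA A

/-- A pair-set `A` is connectable if there is a family of paths in `Q_n`, one
path joining the two vertices of each pair of `A`, such that every vertex of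
`Q_n` lies on exactly one of these paths. -/
def Connectable {n : ℕ} (A : Finset (Sym2 (Vtx n))) : Prop :=
  ∃ (src tgt : Sym2 (Vtx n) → Vtx n)
    (path : (p : Sym2 (Vtx n)) → (cube n).Walk (src p) (tgt p)),
    (∀ p ∈ A, p = s(src p, tgt p)) ∧
    (∀ p ∈ A, (path p).IsPath) ∧
    (∀ v : Vtx n, ∃! p : Sym2 (Vtx n), p ∈ A ∧ v ∈ (path p).support)

/-- `A` contains at least two edge-pairs. -/
def TwoEdgePairs {n : ℕ} (A : Finset (Sym2 (Vtx n))) : Prop :=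
  ∃ p ∈ A, ∃ q ∈ A, p ≠ q ∧ IsEdgePair p ∧ IsEdgePair q

/-- A diminishable pair-set. -/
def Diminishable {n : ℕ} (A : Finset (Sym2 (Vtx n))) : Prop :=
  IsPairSet A ∧ OddPairSet A ∧
  ((A.card ≤ n - 1 ∧
      (n = 4 →
        (∃ p ∈ A, IsEdgePair p) ∨
          ¬∃ X : Set (Vtx n), suppA A ⊆ X ∧
            Nonempty ((cube n).induce X ≃g cube 3))) ∨
    (A.card = n ∧ n ≠ 4 ∧ TwoEdgePairs A ∧ encA A = ∅))

/-- The coordinate `i` is separating for `A`. -/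
def Separating {n : ℕ} (i : Fin n) (A : Finset (Sym2 (Vtx n))) : Prop :=
  ∃ α β α' β' : Vtx n, s(α, β) ∈ A ∧ s(α', β') ∈ A ∧
    hammingDist α β = 1 ∧ hammingDist α' β' = 1 ∧
    α i = β i ∧ α' i = β' i ∧ α i ≠ α' i

/-- The relation `A ⇒ B`. -/
def StepRel {n : ℕ} (A B : Finset (Sym2 (Vtx n))) : Prop :=
  ∃ (α β α' β' : Vtx n) (i : Fin n),
    s(α, β) ∈ A ∧ s(α', β') ∈ A ∧
    β' = Function.update β i (!(β i)) ∧
    B = A \ {s(α, β), s(α', β')} ∪ {s(α, α')}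

/-- Isomorphism of pair-sets, induced by an automorphism of the hypercube. -/
def Isomorphic {n : ℕ} (A B : Finset (Sym2 (Vtx n))) : Prop :=
  ∃ f : cube n ≃g cube n, B = A.image (Sym2.map f)

/-- `ρ_{i=k}` applied to a pair-set: keep the pairs with both `i`-th
coordinates equal to `k` and delete the `i`-th coordinate. -/
def rhoPairs {m : ℕ} (i : Fin (m + 1)) (k : Bool) (B : Finset (Sym2 (Vtx (m + 1)))) :
    Finset (Sym2 (Vtx m)) :=
  (B.filter fun p => ∀ v ∈ p, v i = k).image (Sym2.map (Fin.removeNth i))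

/-- `ρ_{i=k}` applied to a vertex set. -/
def rhoSet {m : ℕ} (i : Fin (m + 1)) (k : Bool) (X : Set (Vtx (m + 1))) : Set (Vtx m) :=
  {γ | ∃ α ∈ X, α i = k ∧ γ = Fin.removeNth i α}

/-- `ι_{i,k}(A, B)`. -/
def iotaPairs {m : ℕ} (i : Fin (m + 1)) (k : Bool) (A B : Finset (Sym2 (Vtx m))) :
    Finset (Sym2 (Vtx (m + 1))) :=
  A.image (Sym2.map (i.insertNth k)) ∪ B.image (Sym2.map (i.insertNth (!k)))


namespace SimpleGraph

variable {V : Type*} {G : SimpleGraph V}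

namespace Walk

lemma IsPath.exists_adj_ne_of_mem_support {a b v : V} {p : G.Walk a b} (hp : p.IsPath)
    (hv : v ∈ p.support) (hva : v ≠ a) (hvb : v ≠ b) :
    ∃ u w, u ≠ w ∧ G.Adj v u ∧ G.Adj v w ∧ u ∈ p.support ∧ w ∈ p.support := by
  obtain ⟨k, rfl, hk⟩ := mem_support_iff_exists_getVert.mp hv
  have hk0 : k ≠ 0 := by rintro rfl; exact hva p.getVert_zero
  have hkl : k ≠ p.length := by rintro rfl; exact hvb p.getVert_length
  refine ⟨p.getVert (k - 1), p.getVert (k + 1), fun h => ?_, ?_, p.adj_getVert_succ (by omega),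
    p.getVert_mem_support _, p.getVert_mem_support _⟩
  · have := hp.getVert_injOn (by simp; omega) (by simp; omega) h
    omega
  · simpa [Nat.sub_add_cancel (Nat.pos_of_ne_zero hk0)] using
      (p.adj_getVert_succ (i := k - 1) (by omega)).symm

end Walk

theorem not_exists_pathCover_of_forall_adj_mem_range {ι : Type*} {a b : ι → V} {v : V}
    (hva : ∀ i, v ≠ a i) (hvb : ∀ i, v ≠ b i)
    (hadj : ∀ u, G.Adj v u → u ∈ Set.range a) :
    ¬ ∃ P : (i : ι) → G.Walk (a i) (b i),
      (∀ i, (P i).IsPath) ∧ ∀ v : V, ∃! i, v ∈ (P i).support := by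
  rintro ⟨P, hP, hcover⟩
  obtain ⟨j, hj, -⟩ := hcover v
  obtain ⟨u, w, huw, hu, hw, hju, hjw⟩ := (hP j).exists_adj_ne_of_mem_support hj (hva j) (hvb j)
  have h_eq_start : ∀ x, G.Adj v x → x ∈ (P j).support → x = a j := by
    rintro x hx hjx
    obtain ⟨k, rfl⟩ := hadj x hx
    rw [(hcover (a k)).unique (P k).start_mem_support hjx]
  exact huw ((h_eq_start u hu hju).trans (h_eq_start w hw hjw).symm)

end SimpleGraph

def Vtx.ofFinset {n : ℕ} (s : Finset (Fin n)) : Vtx n := fun j => decide (j ∈ s)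

namespace Vtx

variable {n : ℕ}

lemma ofFinset_injective : Function.Injective (ofFinset (n := n)) := by
  intro s t h
  ext i
  simpa [ofFinset] using congrFun h i

lemma hammingDist_ofFinset (s t : Finset (Fin n)) :
    hammingDist (ofFinset s) (ofFinset t) = #(symmDiff s t) := by
  unfold hammingDist
  congr 1
  ext i
  simp [ofFinset, Finset.mem_symmDiff]
  tauto

lemma mem_range_singleton_of_adj_empty {u : Vtx n} (h : (cube n).Adj (ofFinset ∅) u) :
    u ∈ Set.range fun k => ofFinset {k} := by
  have hu : u = ofFinset {i | u i} := by funext i; simp [ofFinset]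
  have hcard : #{i | u i} = 1 := by
    have hdist : hammingDist (ofFinset ∅) u = 1 := h
    rwa [hu, hammingDist_ofFinset, ← Finset.bot_eq_empty, bot_symmDiff] at hdist
  obtain ⟨k, hk⟩ := Finset.card_eq_one.mp hcard
  exact ⟨k, by rw [hu, hk]⟩

end Vtx

namespace Fin

variable {m : ℕ}

lemma add_one_ne_self (i : Fin (m + 2)) : i + 1 ≠ i := by
  simp

lemma singleton_ne_pair_add_one (i j : Fin (m + 2)) : ({i} : Finset _) ≠ {j, j + 1} := by
  intro h
  simpa [card_pair (add_one_ne_self j).symm] using congrArg Finset.card h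

lemma pair_add_one_injective :
    Function.Injective fun i : Fin (m + 3) => ({i, i + 1} : Finset _) := by
  intro i j h
  replace h : ({i, i + 1} : Finset _) = {j, j + 1} := h
  have h_two : (1 + 1 : Fin (m + 3)) ≠ 0 := by
    simp [Fin.ext_iff, Fin.val_add, Nat.mod_eq_of_lt (show 2 < m + 3 by omega)]
  by_contra hij
  have hi : i ∈ ({j, j + 1} : Finset _) := h ▸ mem_insert_self i {i + 1}
  have hj : j ∈ ({i, i + 1} : Finset _) := h ▸ mem_insert_self j {j + 1}
  replace hi : i = j + 1 := by simpa [hij] using hi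
  replace hj : j = i + 1 := by simpa [Ne.symm hij] using hj
  exact h_two (by simpa [add_assoc, hj] using hi.symm)

end Fin

/-- For every `n > 2` there are `n` pairwise disjoint pairs
of vertices of `Q_n` at odd Hamming distances that cannot be joined by `n`
pairwise vertex-disjoint paths covering every vertex of `Q_n` exactly once. -/
theorem stmt1 (n : ℕ) (hn : 2 < n) :
    ∃ α β : Fin n → Vtx n,
      (∀ i : Fin n, Odd (hammingDist (α i) (β i))) ∧
      (∀ i j : Fin n, i ≠ j →
        ({α i, β i} : Set (Vtx n)) ∩ {α j, β j} = ∅) ∧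
      ¬ ∃ P : (i : Fin n) → (cube n).Walk (α i) (β i),
          (∀ i : Fin n, (P i).IsPath) ∧
          ∀ v : Vtx n, ∃! i : Fin n, v ∈ (P i).support := by
  obtain ⟨m, rfl⟩ : ∃ m, n = m + 3 := ⟨n - 3, by omega⟩
  refine ⟨fun i => Vtx.ofFinset {i}, fun i => Vtx.ofFinset {i, i + 1}, fun i => ?_,
    fun i j hij => ?_, not_exists_pathCover_of_forall_adj_mem_range (v := Vtx.ofFinset ∅)
      (fun i => ?_) (fun i => ?_) fun _ => Vtx.mem_range_singleton_of_adj_empty⟩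
  · have hdiff : symmDiff {i} {i, i + 1} = ({i + 1} : Finset (Fin (m + 3))) := by
      have := Fin.add_one_ne_self i
      ext x
      simp only [mem_symmDiff, mem_singleton, mem_insert]
      grind
    simp [Vtx.hammingDist_ofFinset, hdiff]
  · simp only [Set.eq_empty_iff_forall_notMem, Set.mem_inter_iff, Set.mem_insert_iff,
      Set.mem_singleton_iff]
    rintro v ⟨rfl | rfl, h | h⟩ <;> replace h := Vtx.ofFinset_injective h
    · exact hij (singleton_injective h)
    · exact Fin.singleton_ne_pair_add_one i j h
    · exact Fin.singleton_ne_pair_add_one j i h.symm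
    · exact hij (Fin.pair_add_one_injective h)
  · exact Vtx.ofFinset_injective.ne (singleton_ne_empty i).symm
  · exact Vtx.ofFinset_injective.ne (insert_ne_empty _ _).symm
end

section
/- Let A be a balanced pair-set in Q_n with |A| ≤ 2n-3. Then the set enco(∪A) of vertices encompassed by ∪A has at most 2 elements, and if α, β ∈ enco(∪A) are distinct then χ(α) ≠ χ(β). -/
open SimpleGraph Finset

attribute [local instance 10] Classical.propDecidable

/-!
Suppose two distinct encompassed vertices `γ, γ'` had the same parity. Their neighbours all
have the opposite parity `ε`, all lie in `∪A`, and there are at least `2n - 2` of them, since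
two distinct vertices of `Q_n` have at most two common neighbours. A pair `{α, β}` contains at
most `(2 + ε (χ α + χ β)) / 2` vertices of parity `ε`, so by balance `∪A` contains at most `|A|`
such vertices, contradicting `|A| ≤ 2n - 3`. Hence distinct encompassed vertices have distinct
parities, and there are at most two of them.
-/

variable {n : ℕ}

theorem cube_adj {α β : Vtx n} : (cube n).Adj α β ↔ hammingDist α β = 1 := Iff.rfl

section Parity

theorem chi_mul_chi (α β : Vtx n) : chi α * chi β = (-1) ^ hammingDist α β := by
  have hcoord : ∀ i, ((if α i then (-1 : ℤ) else 1) * if β i then -1 else 1)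
      = if α i ≠ β i then -1 else 1 := by
    intro i
    cases α i <;> cases β i <;> simp
  rw [chi, chi, ← prod_mul_distrib, prod_congr rfl fun i _ => hcoord i, prod_ite,
    prod_const, prod_const, one_pow, mul_one, hammingDist]

theorem chi_mul_self (α : Vtx n) : chi α * chi α = 1 := by
  simp [chi_mul_chi]

theorem chi_eq_one_or_eq_neg_one (α : Vtx n) : chi α = 1 ∨ chi α = -1 :=
  mul_self_eq_one_iff.mp (chi_mul_self α)

theorem chi_eq_neg_of_adj {α β : Vtx n} (h : (cube n).Adj α β) : chi β = -chi α := by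
  have hαβ : chi α * chi β = -1 := by rw [chi_mul_chi, cube_adj.mp h, pow_one]
  linear_combination chi α * hαβ - chi β * chi_mul_self α

theorem two_le_hammingDist_of_chi_eq {α β : Vtx n} (hne : α ≠ β) (h : chi α = chi β) :
    2 ≤ hammingDist α β := by
  have hpos : 0 < hammingDist α β := hammingDist_pos.mpr hne
  have heven : Even (hammingDist α β) := by
    by_contra hodd
    have := chi_mul_chi α β
    rw [h, chi_mul_self, (Nat.not_even_iff_odd.mp hodd).neg_one_pow] at this
    norm_num at this
  obtain ⟨k, hk⟩ := heven
  omega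

end Parity

section Neighbours

def flipCoord (γ : Vtx n) (a : Fin n) : Vtx n := Function.update γ a (!γ a)

theorem flipCoord_injective (γ : Vtx n) : Function.Injective (flipCoord γ) := by
  intro a b hab
  by_contra hne
  have := congrFun hab a
  simp [flipCoord, Function.update_of_ne hne] at this

theorem apply_eq_of_hammingDist_eq_one {α β : Vtx n} (h : hammingDist α β = 1) {a j : Fin n}
    (ha : α a ≠ β a) (hj : j ≠ a) : α j = β j := by
  by_contra hne
  exact hj (card_le_one.mp h.le j (by simpa using hne) a (by simpa using ha))

theorem hammingDist_eq_one_iff_exists_flipCoord {γ v : Vtx n} :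
    hammingDist γ v = 1 ↔ ∃ a, v = flipCoord γ a := by
  constructor
  · intro h
    obtain ⟨a, ha⟩ := card_eq_one.mp h
    have hda : γ a ≠ v a := by
      have := mem_singleton_self a
      rw [← ha] at this
      exact (mem_filter.mp this).2
    refine ⟨a, funext fun j => ?_⟩
    by_cases hj : j = a
    · subst hj
      simp only [flipCoord, Function.update_self]
      cases hγ : γ j <;> cases hv : v j <;> simp_all
    · rw [flipCoord, Function.update_of_ne hj, apply_eq_of_hammingDist_eq_one h hda hj]
  · rintro ⟨a, rfl⟩
    have : univ.filter (fun i => γ i ≠ flipCoord γ a i) = {a} := by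
      ext j
      rw [mem_filter, mem_singleton]
      by_cases hj : j = a <;> simp [flipCoord, hj]
    rw [hammingDist, this, card_singleton]

theorem neighborFinset_cube (γ : Vtx n) :
    (cube n).neighborFinset γ = univ.image (flipCoord γ) := by
  ext v
  simp only [mem_neighborFinset, cube_adj, hammingDist_eq_one_iff_exists_flipCoord, mem_image,
    mem_univ, true_and]
  exact exists_congr fun a => eq_comm

theorem card_neighborFinset_cube (γ : Vtx n) : #((cube n).neighborFinset γ) = n := by
  rw [neighborFinset_cube, card_image_of_injective _ (flipCoord_injective γ), card_univ,
    Fintype.card_fin]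

theorem card_neighborFinset_inter_le_two {γ γ' : Vtx n} (hne : γ ≠ γ') :
    #((cube n).neighborFinset γ ∩ (cube n).neighborFinset γ') ≤ 2 := by
  set D := univ.filter fun i => γ i ≠ γ' i
  rcases ((cube n).neighborFinset γ ∩ (cube n).neighborFinset γ').eq_empty_or_nonempty
    with hempty | ⟨w, hw⟩
  · simp [hempty]
  have hD : #D ≤ 2 := by
    simp only [mem_inter, mem_neighborFinset, cube_adj] at hw
    calc #D = hammingDist γ γ' := rfl
      _ ≤ hammingDist γ w + hammingDist w γ' := hammingDist_triangle γ w γ'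
      _ = 2 := by rw [hw.1, hammingDist_comm, hw.2]
  calc _ ≤ #(D.image (flipCoord γ)) := card_le_card fun v hv => ?_
    _ ≤ #D := card_image_le
    _ ≤ 2 := hD
  simp only [mem_inter, mem_neighborFinset, cube_adj] at hv
  obtain ⟨a, rfl⟩ := hammingDist_eq_one_iff_exists_flipCoord.mp hv.1
  refine mem_image.mpr ⟨a, ?_, rfl⟩
  -- if `γ` and `γ'` agreed at `a`, they would both differ from `flipCoord γ a` only there
  by_contra haD
  have hγa : γ' a = γ a := by simpa [D, eq_comm] using haD
  have hdiff : γ' a ≠ flipCoord γ a a := by simp [flipCoord, hγa]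
  refine hne (funext fun j => ?_)
  by_cases hj : j = a
  · rw [hj, hγa]
  · rw [apply_eq_of_hammingDist_eq_one hv.2 hdiff hj, flipCoord,
      Function.update_of_ne hj]

theorem two_mul_le_card_neighborFinset_union_add_two {γ γ' : Vtx n} (hne : γ ≠ γ') :
    2 * n ≤ #((cube n).neighborFinset γ ∪ (cube n).neighborFinset γ') + 2 := by
  have := card_union_add_card_inter ((cube n).neighborFinset γ) ((cube n).neighborFinset γ')
  have := card_neighborFinset_inter_le_two hne
  rw [card_neighborFinset_cube, card_neighborFinset_cube] at *
  omega

end Neighbours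

section Counting

theorem card_filter_mem_mk_le {V : Type*} [DecidableEq V] (S : Finset V) (α β : V) :
    #(S.filter (· ∈ s(α, β))) ≤ (if α ∈ S then 1 else 0) + (if β ∈ S then 1 else 0) := by
  calc #(S.filter (· ∈ s(α, β)))
      ≤ #((if α ∈ S then {α} else ∅) ∪ (if β ∈ S then {β} else ∅)) := card_le_card ?_
    _ ≤ _ := (card_union_le _ _).trans (by split_ifs <;> simp)
  intro v hv
  rw [mem_filter, Sym2.mem_iff] at hv
  rcases hv with ⟨hvS, rfl | rfl⟩ <;> simp [hvS]

variable {A : Finset (Sym2 (Vtx n))} {S : Finset (Vtx n)} {ε : ℤ}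

theorem two_mul_ite_mem_le (hε : ε * ε = 1) (hS : ∀ v ∈ S, chi v = ε) (v : Vtx n) :
    2 * (if v ∈ S then 1 else 0 : ℤ) ≤ 1 + ε * chi v := by
  split_ifs with hv
  · rw [hS v hv, hε]
    norm_num
  · have hsq : (ε * chi v) * (ε * chi v) = 1 := by
      linear_combination (chi v * chi v) * hε + chi_mul_self v
    rcases mul_self_eq_one_iff.mp hsq with h | h <;> linarith

theorem two_mul_card_filter_mem_le (hε : ε * ε = 1) (hS : ∀ v ∈ S, chi v = ε)
    (p : Sym2 (Vtx n)) : 2 * (#(S.filter (· ∈ p)) : ℤ) ≤ 2 + ε * pairChi p := by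
  induction p using Sym2.ind with
  | _ α β =>
  have hcard : (#(S.filter (· ∈ s(α, β))) : ℤ) ≤
      (if α ∈ S then 1 else 0) + (if β ∈ S then 1 else 0) := by
    exact_mod_cast card_filter_mem_mk_le S α β
  have hα := two_mul_ite_mem_le hε hS α
  have hβ := two_mul_ite_mem_le hε hS β
  simp only [pairChi, Sym2.lift_mk]
  linarith

theorem card_le_card_of_balanced (hbal : BalancedPS A) (hε : ε * ε = 1)
    (hS : ∀ v ∈ S, chi v = ε) (hcover : ∀ v ∈ S, v ∈ suppA A) : #S ≤ #A := by
  have hsub : S ⊆ A.biUnion fun p => S.filter (· ∈ p) := fun v hv => by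
    obtain ⟨p, hp, hvp⟩ := hcover v hv
    exact mem_biUnion.mpr ⟨p, hp, mem_filter.mpr ⟨hv, hvp⟩⟩
  have hunion : (#S : ℤ) ≤ ∑ p ∈ A, (#(S.filter (· ∈ p)) : ℤ) := by
    exact_mod_cast (card_le_card hsub).trans card_biUnion_le
  have : 2 * (#S : ℤ) ≤ 2 * #A := calc
    2 * (#S : ℤ) ≤ ∑ p ∈ A, 2 * (#(S.filter (· ∈ p)) : ℤ) := by rw [← mul_sum]; linarith
    _ ≤ ∑ p ∈ A, (2 + ε * pairChi p) :=
      sum_le_sum fun p _ => two_mul_card_filter_mem_le hε hS p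
    _ = 2 * #A := by
      rw [sum_add_distrib, ← mul_sum, show ∑ p ∈ A, pairChi p = 0 from hbal]
      simp [mul_comm]
  omega

theorem card_neighborFinset_union_le_card (hbal : BalancedPS A) {γ γ' : Vtx n}
    (hγ : γ ∈ enco (suppA A)) (hγ' : γ' ∈ enco (suppA A)) (hχ : chi γ = chi γ') :
    #((cube n).neighborFinset γ ∪ (cube n).neighborFinset γ') ≤ #A := by
  refine card_le_card_of_balanced hbal (ε := -chi γ) (by rw [neg_mul_neg, chi_mul_self])
    (fun v hv => ?_) (fun v hv => ?_) <;> rcases mem_union.mp hv with h | h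
  · exact chi_eq_neg_of_adj ((mem_neighborFinset _ _ _).mp h)
  · rw [hχ]
    exact chi_eq_neg_of_adj ((mem_neighborFinset _ _ _).mp h)
  · exact hγ v ((mem_neighborFinset _ _ _).mp h)
  · exact hγ' v ((mem_neighborFinset _ _ _).mp h)

end Counting

theorem chi_ne_of_mem_enco {A : Finset (Sym2 (Vtx n))} (hbal : BalancedPS A)
    (hcard : #A ≤ 2 * n - 3) {γ γ' : Vtx n} (hγ : γ ∈ enco (suppA A))
    (hγ' : γ' ∈ enco (suppA A)) (hne : γ ≠ γ') : chi γ ≠ chi γ' := by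
  intro hχ
  have hdist := two_le_hammingDist_of_chi_eq hne hχ
  have hn : hammingDist γ γ' ≤ n := hammingDist_le_card_fintype.trans_eq (Fintype.card_fin n)
  have hupper := card_neighborFinset_union_le_card hbal hγ hγ' hχ
  have hlower := two_mul_le_card_neighborFinset_union_add_two hne
  omega

theorem encard_le_two_of_injOn_chi {X : Set (Vtx n)} (h : Set.InjOn chi X) : X.encard ≤ 2 :=
  calc X.encard = (chi '' X).encard := h.encard_image.symm
    _ ≤ ({1, -1} : Set ℤ).encard := Set.encard_mono fun _ ⟨α, _, hα⟩ =>
      hα ▸ chi_eq_one_or_eq_neg_one α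
    _ = 2 := Set.encard_pair (by norm_num)

theorem stmt9_general (n : ℕ) (A : Finset (Sym2 (Vtx n)))
    (hbal : BalancedPS A) (hcard : A.card ≤ 2 * n - 3) :
    (enco (suppA A)).encard ≤ 2 ∧
    ∀ α β : Vtx n, α ∈ enco (suppA A) → β ∈ enco (suppA A) → α ≠ β →
      chi α ≠ chi β :=
  ⟨encard_le_two_of_injOn_chi fun _ hα _ hβ hχ =>
      by_contra fun hne => chi_ne_of_mem_enco hbal hcard hα hβ hne hχ,
    fun _ _ hα hβ hne => chi_ne_of_mem_enco hbal hcard hα hβ hne⟩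

/-- If `A` is a balanced pair-set in `Q_n` with
`|A| ≤ 2n - 3`, then at most two vertices are encompassed by `∪A`, and two
distinct encompassed vertices have different parities. -/
theorem stmt9 (n : ℕ) (A : Finset (Sym2 (Vtx n)))
    (hA : IsPairSet A) (hbal : BalancedPS A) (hcard : A.card ≤ 2 * n - 3) :
    (enco (suppA A)).encard ≤ 2 ∧
    ∀ α β : Vtx n, α ∈ enco (suppA A) → β ∈ enco (suppA A) → α ≠ β →
      chi α ≠ chi β :=
  stmt9_general n A hbal hcard
end

section
/- Let n > 1, let A and B be connectable pair-sets in Q_{n-1}, let i ∈ [n] and k ∈ {0,1}. Then the pair-set ι_{i,k}(A,B) in Q_n is connectable, where ι_{i,k}(A,B) consists of all pairs {ι_{i=k}(α), ι_{i=k}(β)} for {α,β} ∈ A together with all pairs {ι_{i=1-k}(α), ι_{i=1-k}(β)} for {α,β} ∈ B. -/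
open SimpleGraph Finset

attribute [local instance 10] Classical.propDecidable

/-!
The coordinate `i` splits `Q_n` into the two halves `{v | v i = k}` and `{v | v i = !k}`, and
`ι_{i=k}`, `ι_{i=!k}` embed `Q_{n-1}` onto them as induced subgraphs. A path cover witnessing
that `A` is connectable is carried by `ι_{i=k}` onto a path cover of the first half, one for `B`
onto the second half, and the two together cover `Q_n`.
-/

section PathCover

variable {V V₁ V₂ : Type*} {G : SimpleGraph V} {G₁ : SimpleGraph V₁} {G₂ : SimpleGraph V₂}

def mapWalk (φ : G₁ →g G) (w : Σ' a b : V₁, G₁.Walk a b) : Σ' a b : V, G.Walk a b :=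
  ⟨φ w.1, φ w.2.1, w.2.2.map φ⟩

lemma mem_support_mapWalk {φ : G₁ →g G} {w : Σ' a b : V₁, G₁.Walk a b} {v : V} :
    v ∈ (mapWalk φ w).2.2.support ↔ ∃ u ∈ w.2.2.support, φ u = v := by
  simp only [mapWalk, Walk.support_map, List.mem_map]

def JoinsByPath (p : Sym2 V) (w : Σ' a b : V, G.Walk a b) : Prop :=
  p = s(w.1, w.2.1) ∧ w.2.2.IsPath

lemma JoinsByPath.map {q : Sym2 V₁} {w : Σ' a b : V₁, G₁.Walk a b} (f : G₁ ↪g G)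
    (h : JoinsByPath q w) : JoinsByPath (Sym2.map f q) (mapWalk f.toHom w) := by
  obtain ⟨rfl, hpath⟩ := h
  exact ⟨Sym2.map_mk _ _ _, hpath.map f.injective⟩

def IsPathCover (A : Finset (Sym2 V)) (W : Sym2 V → Σ' a b : V, G.Walk a b) : Prop :=
  (∀ p ∈ A, JoinsByPath p (W p)) ∧ ∀ v, ∃! p, p ∈ A ∧ v ∈ (W p).2.2.support

lemma connectable_iff_exists_isPathCover {n : ℕ} {A : Finset (Sym2 (Vtx n))} :
    Connectable A ↔ ∃ W : Sym2 (Vtx n) → Σ' a b, (cube n).Walk a b, IsPathCover A W := by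
  constructor
  · rintro ⟨src, tgt, path, hends, hpath, hcover⟩
    exact ⟨fun p => ⟨src p, tgt p, path p⟩, fun p hp => ⟨hends p hp, hpath p hp⟩, hcover⟩
  · rintro ⟨W, hjoin, hcover⟩
    exact ⟨fun p => (W p).1, fun p => (W p).2.1, fun p => (W p).2.2,
      fun p hp => (hjoin p hp).1, fun p hp => (hjoin p hp).2, hcover⟩

noncomputable def glueWalks (f : G₁ ↪g G) (g : G₂ ↪g G)
    (W₁ : Sym2 V₁ → Σ' a b : V₁, G₁.Walk a b) (W₂ : Sym2 V₂ → Σ' a b : V₂, G₂.Walk a b)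
    (p : Sym2 V) : Σ' a b : V, G.Walk a b :=
  if h : p ∈ Set.range (Sym2.map f) then mapWalk f.toHom (W₁ h.choose)
  else if h' : p ∈ Set.range (Sym2.map g) then mapWalk g.toHom (W₂ h'.choose)
  else ⟨_, _, Walk.nil' (p.out.1)⟩

lemma map_notMem_range_map {f : G₁ ↪g G} {g : G₂ ↪g G}
    (hdisj : Disjoint (Set.range f) (Set.range g)) (q : Sym2 V₂) :
    Sym2.map g q ∉ Set.range (Sym2.map f) := by
  rintro ⟨q', hq'⟩
  induction q using Sym2.ind with
  | _ a b =>
    obtain ⟨c, -, hc⟩ := Sym2.mem_map.mp (hq' ▸ Sym2.mem_map.mpr ⟨a, Sym2.mem_mk_left a b, rfl⟩)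
    exact Set.disjoint_left.mp hdisj ⟨c, hc⟩ ⟨a, rfl⟩

variable {f : G₁ ↪g G} {g : G₂ ↪g G}
  {W₁ : Sym2 V₁ → Σ' a b : V₁, G₁.Walk a b} {W₂ : Sym2 V₂ → Σ' a b : V₂, G₂.Walk a b}

lemma glueWalks_map_left (q : Sym2 V₁) :
    glueWalks f g W₁ W₂ (Sym2.map f q) = mapWalk f.toHom (W₁ q) := by
  have h : Sym2.map f q ∈ Set.range (Sym2.map f) := ⟨q, rfl⟩
  rw [glueWalks, dif_pos h, Sym2.map.injective f.injective h.choose_spec]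

lemma glueWalks_map_right (hdisj : Disjoint (Set.range f) (Set.range g)) (q : Sym2 V₂) :
    glueWalks f g W₁ W₂ (Sym2.map g q) = mapWalk g.toHom (W₂ q) := by
  have h : Sym2.map g q ∈ Set.range (Sym2.map g) := ⟨q, rfl⟩
  rw [glueWalks, dif_neg (map_notMem_range_map hdisj q), dif_pos h,
    Sym2.map.injective g.injective h.choose_spec]

lemma existsUnique_mem_support_of_eq_mapWalk [DecidableEq V]
    {A : Finset (Sym2 V₁)} {B : Finset (Sym2 V₂)}
    {W : Sym2 V → Σ' a b : V, G.Walk a b} (hdisj : Disjoint (Set.range f) (Set.range g))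
    (hW₁ : ∀ q, W (Sym2.map f q) = mapWalk f.toHom (W₁ q))
    (hW₂ : ∀ q, W (Sym2.map g q) = mapWalk g.toHom (W₂ q))
    (hcover : ∀ u, ∃! q, q ∈ A ∧ u ∈ (W₁ q).2.2.support) (u : V₁) :
    ∃! p, p ∈ A.image (Sym2.map f) ∪ B.image (Sym2.map g) ∧ f u ∈ (W p).2.2.support := by
  obtain ⟨q, ⟨hq, hu⟩, huniq⟩ := hcover u
  refine ⟨Sym2.map f q, ⟨mem_union_left _ (mem_image_of_mem _ hq), ?_⟩, ?_⟩
  · rw [hW₁, mem_support_mapWalk]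
    exact ⟨u, hu, rfl⟩
  rintro p ⟨hp, hv⟩
  rcases mem_union.mp hp with hp | hp <;> obtain ⟨q', hq', rfl⟩ := mem_image.mp hp
  · rw [hW₁, mem_support_mapWalk] at hv
    obtain ⟨u', hu', hu'u⟩ := hv
    rw [f.injective hu'u] at hu'
    rw [huniq q' ⟨hq', hu'⟩]
  · rw [hW₂, mem_support_mapWalk] at hv
    obtain ⟨u', -, hu'u⟩ := hv
    exact (Set.disjoint_left.mp hdisj ⟨u, rfl⟩ ⟨u', hu'u⟩).elim

theorem IsPathCover.glue [DecidableEq V] {A : Finset (Sym2 V₁)} {B : Finset (Sym2 V₂)}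
    (hfg : IsCompl (Set.range f) (Set.range g)) (h₁ : IsPathCover A W₁) (h₂ : IsPathCover B W₂) :
    IsPathCover (A.image (Sym2.map f) ∪ B.image (Sym2.map g)) (glueWalks f g W₁ W₂) := by
  refine ⟨fun p hp => ?_, fun v => ?_⟩
  · rcases mem_union.mp hp with hp | hp <;> obtain ⟨q, hq, rfl⟩ := mem_image.mp hp
    · rw [glueWalks_map_left]
      exact (h₁.1 q hq).map f
    · rw [glueWalks_map_right hfg.disjoint]
      exact (h₂.1 q hq).map g
  by_cases hv : v ∈ Set.range f
  · obtain ⟨u, rfl⟩ := hv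
    exact existsUnique_mem_support_of_eq_mapWalk hfg.disjoint glueWalks_map_left
      (glueWalks_map_right hfg.disjoint) h₁.2 u
  · obtain ⟨u, rfl⟩ : v ∈ Set.range g := hfg.compl_eq ▸ hv
    rw [union_comm]
    exact existsUnique_mem_support_of_eq_mapWalk hfg.disjoint.symm
      (glueWalks_map_right hfg.disjoint) glueWalks_map_left h₂.2 u

end PathCover

theorem Connectable.image_union_image {m₁ m₂ n : ℕ} {A : Finset (Sym2 (Vtx m₁))}
    {B : Finset (Sym2 (Vtx m₂))} {f : cube m₁ ↪g cube n} {g : cube m₂ ↪g cube n}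
    (hfg : IsCompl (Set.range f) (Set.range g)) (hA : Connectable A) (hB : Connectable B) :
    Connectable (A.image (Sym2.map f) ∪ B.image (Sym2.map g)) := by
  obtain ⟨W₁, hW₁⟩ := connectable_iff_exists_isPathCover.mp hA
  obtain ⟨W₂, hW₂⟩ := connectable_iff_exists_isPathCover.mp hB
  exact connectable_iff_exists_isPathCover.mpr ⟨glueWalks f g W₁ W₂, hW₁.glue hfg hW₂⟩

section Insertion

variable {m : ℕ}

lemma hammingDist_insertNth (i : Fin (m + 1)) (c : Bool) (α β : Vtx m) :
    hammingDist (i.insertNth c α : Vtx (m + 1)) (i.insertNth c β) = hammingDist α β := by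
  unfold hammingDist
  rw [card_filter, card_filter, Fin.sum_univ_succAbove _ i]
  simp

/-- `ι_{i=c}` as an embedding of `Q_m` into `Q_{m+1}`. -/
def insertNthEmbedding (i : Fin (m + 1)) (c : Bool) : cube m ↪g cube (m + 1) :=
  ⟨⟨fun α => i.insertNth c α, Fin.insertNth_right_injective (α := fun _ => Bool) c⟩,
    by simp [cube, hammingDist_insertNth]⟩

lemma range_insertNthEmbedding (i : Fin (m + 1)) (c : Bool) :
    Set.range (insertNthEmbedding i c) = {v | v i = c} := by
  ext v
  constructor
  · rintro ⟨α, rfl⟩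
    exact Fin.insertNth_apply_same (α := fun _ => Bool) i c α
  · rintro (rfl : v i = c)
    exact ⟨Fin.removeNth i v, Fin.insertNth_self_removeNth i v⟩

lemma isCompl_range_insertNthEmbedding (i : Fin (m + 1)) (k : Bool) :
    IsCompl (Set.range (insertNthEmbedding i k)) (Set.range (insertNthEmbedding i !k)) := by
  have hcompl : {v : Vtx (m + 1) | v i = !k} = {v | v i = k}ᶜ := by
    ext v
    exact Bool.eq_not_iff
  rw [range_insertNthEmbedding, range_insertNthEmbedding, hcompl]
  exact isCompl_compl

end Insertion

theorem stmt11_general (m : ℕ) (A B : Finset (Sym2 (Vtx m)))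
    (hcA : Connectable A) (hcB : Connectable B)
    (i : Fin (m + 1)) (k : Bool) :
    Connectable (iotaPairs i k A B) :=
  Connectable.image_union_image (f := insertNthEmbedding i k) (g := insertNthEmbedding i !k)
    (isCompl_range_insertNthEmbedding i k) hcA hcB

/-- For `n = m + 1 > 1`, if `A` and `B` are connectable
pair-sets in `Q_{n-1}`, then `ι_{i,k}(A, B)` is a connectable pair-set in
`Q_n`, for every `i ∈ [n]` and `k ∈ {0,1}`. -/
theorem stmt11 (m : ℕ) (hm : 1 ≤ m) (A B : Finset (Sym2 (Vtx m)))
    (hA : IsPairSet A) (hB : IsPairSet B)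
    (hcA : Connectable A) (hcB : Connectable B)
    (i : Fin (m + 1)) (k : Bool) :
    Connectable (iotaPairs i k A B) :=
  stmt11_general m A B hcA hcB i k
end
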